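/- Let F : Δ_A → [0,1]^K be L-Lipschitz, let δ ≥ 0, and let π* ∈ Δ_A be a δ-MF-NE of F. Then the symmetric strategy profile (π*, …, π*) ∈ Δ_A^N is a (δ + L(2√2 + 4)/N + 4L/√N)-Nash equilibrium of the N-player game; that is, for every player i, E^i_exp(π*, …, π*) ≤ δ + L(2√2 + 4)/N + 4L/√N. -/

import Mathlib

/-!
Write `w(v) = ∏ⱼ πⱼ(vⱼ)` for the law of the action profile `v` under independent mixed
strategies `π`, and `m` for the mean of the `πⱼ`. Since the centred indicators `e_{vⱼ} - πⱼ` are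
independent, the cross terms of `‖μ̂ - m‖²` have mean zero and `E‖μ̂ - m‖² ≤ 2 / N`, hence
`E‖μ̂ - m‖ ≤ √(2 / N)`. As `F` is `L`-Lipschitz, `V^i(π)` is then within
`L ‖m - π*‖ + L √(2 / N)` of the mean-field payoff `∑ₐ πᵢ(a) F(π*, a)`. A unilateral deviation from
`(π*, …, π*)` moves `m` by at most `√2 / N`, so the deviating and the equilibrium payoffs are both
within `L √2 / N + L √(2 / N)` of their mean-field values, and the `δ`-MF-NE inequality compares
those.
-/

open scoped BigOperators
open MeasureTheory ProbabilityTheory Finset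

noncomputable section

/-- The probability simplex over `Fin K`, inside Euclidean space (ℓ2 norm). -/
def simplex (K : ℕ) : Set (EuclideanSpace ℝ (Fin K)) :=
  {x | (∀ a, 0 ≤ x a) ∧ ∑ a, x a = 1}

/-- Empirical occupancy measure `μ̂ = (1/N) ∑_j e_{a^j}` of an action profile. -/
def empDist (K N : ℕ) (v : Fin N → Fin K) : EuclideanSpace ℝ (Fin K) :=
  (N : ℝ)⁻¹ • ∑ j : Fin N, EuclideanSpace.single (v j) (1 : ℝ)

/-- Expected payoff `V^i(π¹,…,π^N) = E[F(μ̂)(a^i)]`, written as the finite sum over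
action profiles weighted by the product of the independent mixed strategies. -/
def Vval (K N : ℕ) (F : EuclideanSpace ℝ (Fin K) → EuclideanSpace ℝ (Fin K))
    (π : Fin N → EuclideanSpace ℝ (Fin K)) (i : Fin N) : ℝ :=
  ∑ v : Fin N → Fin K, (∏ j : Fin N, π j (v j)) * F (empDist K N v) (v i)

/-- Exploitability `E^i_exp(π¹,…,π^N) = sup_{π′∈Δ} V^i(π′,π^{−i}) − V^i(π¹,…,π^N)`. -/
def expl (K N : ℕ) (F : EuclideanSpace ℝ (Fin K) → EuclideanSpace ℝ (Fin K))
    (π : Fin N → EuclideanSpace ℝ (Fin K)) (i : Fin N) : ℝ :=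
  (⨆ p : simplex K, Vval K N F (Function.update π i (p : EuclideanSpace ℝ (Fin K))) i)
    - Vval K N F π i

theorem Finset.sum_mul_le_sqrt_sum_mul_sq {β : Type*} (s : Finset β) {w x : β → ℝ}
    (hw : ∀ i ∈ s, 0 ≤ w i) (hw1 : ∑ i ∈ s, w i = 1) :
    ∑ i ∈ s, w i * x i ≤ √(∑ i ∈ s, w i * x i ^ 2) := by
  refine (le_abs_self _).trans (Real.abs_le_sqrt ?_)
  have h := sum_sq_le_sum_mul_sum_of_sq_le_mul s (r := fun i => w i * x i)
    (g := fun i => w i * x i ^ 2) hw (fun i hi => mul_nonneg (hw i hi) (sq_nonneg _))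
    (fun i _ => le_of_eq (by ring))
  rwa [hw1, one_mul] at h

/-! `∑ v, (∏ j, p j (v j)) * f v` is the expectation of `f` when the coordinates `v j` are
independent with laws `p j`. -/

namespace ProductWeight

variable {ι α : Type*} [Fintype ι] [DecidableEq ι] [Fintype α] {p : ι → α → ℝ}

theorem sum_prod_mul_prod (p g : ι → α → ℝ) :
    ∑ v : ι → α, (∏ j, p j (v j)) * ∏ j, g j (v j) = ∏ j, ∑ a, p j a * g j a := by
  simp_rw [← prod_mul_distrib]
  exact (Fintype.prod_sum fun j a => p j a * g j a).symm

theorem sum_prod_eq_one (hp : ∀ j, ∑ a, p j a = 1) : ∑ v : ι → α, ∏ j, p j (v j) = 1 := by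
  simpa [hp] using sum_prod_mul_prod p (fun _ _ => 1)

theorem sum_prod_mul_apply (hp : ∀ j, ∑ a, p j a = 1) (i : ι) (f : α → ℝ) :
    ∑ v : ι → α, (∏ j, p j (v j)) * f (v i) = ∑ a, p i a * f a := by
  have h := sum_prod_mul_prod p (fun j a => if j = i then f a else 1)
  simp only [mul_ite, mul_one, Fintype.prod_ite_eq'] at h
  rw [h, Fintype.prod_eq_single i (fun j hj => by simp [hj, hp])]
  simp

theorem sum_prod_mul_apply_mul_apply (hp : ∀ j, ∑ a, p j a = 1) {j k : ι} (hjk : j ≠ k)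
    (f g : α → ℝ) :
    ∑ v : ι → α, (∏ l, p l (v l)) * (f (v j) * g (v k))
      = (∑ a, p j a * f a) * ∑ a, p k a * g a := by
  have h := sum_prod_mul_prod p (fun l a => (if l = j then f a else 1) * if l = k then g a else 1)
  simp only [prod_mul_distrib, Fintype.prod_ite_eq'] at h
  rw [h, Fintype.prod_eq_mul j k hjk]
  · simp [hjk, hjk.symm]
  · rintro l ⟨hlj, hlk⟩
    simp [hlj, hlk, hp]

theorem sum_prod_mul_sum_sq (hp : ∀ j, ∑ a, p j a = 1) (φ : ι → α → ℝ)
    (hφ : ∀ j, ∑ a, p j a * φ j a = 0) :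
    ∑ v : ι → α, (∏ j, p j (v j)) * (∑ j, φ j (v j)) ^ 2 = ∑ j, ∑ a, p j a * φ j a ^ 2 := by
  have cross (j k : ι) : ∑ v : ι → α, (∏ l, p l (v l)) * (φ j (v j) * φ k (v k))
      = if j = k then ∑ a, p j a * φ j a ^ 2 else 0 := by
    split_ifs with hjk
    · subst hjk
      simp_rw [← sq]
      exact sum_prod_mul_apply hp j (fun a => φ j a ^ 2)
    · rw [sum_prod_mul_apply_mul_apply hp hjk, hφ, zero_mul]
  calc ∑ v : ι → α, (∏ j, p j (v j)) * (∑ j, φ j (v j)) ^ 2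
      = ∑ j, ∑ k, ∑ v : ι → α, (∏ l, p l (v l)) * (φ j (v j) * φ k (v k)) := by
        simp_rw [sq, sum_mul_sum, mul_sum]
        rw [sum_comm]
        exact sum_congr rfl fun j _ => sum_comm
    _ = ∑ j, ∑ a, p j a * φ j a ^ 2 := by simp_rw [cross, sum_ite_eq, if_pos (mem_univ _)]

theorem sum_prod_mul_norm_sum_sq (hp : ∀ j, ∑ a, p j a = 1) {κ : Type*} [Fintype κ]
    (X : ι → α → EuclideanSpace ℝ κ) (hX : ∀ j, ∑ a, p j a • X j a = 0) :
    ∑ v : ι → α, (∏ j, p j (v j)) * ‖∑ j, X j (v j)‖ ^ 2 = ∑ j, ∑ a, p j a * ‖X j a‖ ^ 2 := by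
  have hcoord (c : κ) (j : ι) : ∑ a, p j a * X j a c = 0 := by
    simpa using congrArg (· c) (hX j)
  calc ∑ v : ι → α, (∏ j, p j (v j)) * ‖∑ j, X j (v j)‖ ^ 2
      = ∑ c, ∑ v : ι → α, (∏ j, p j (v j)) * (∑ j, X j (v j) c) ^ 2 := by
        simp_rw [EuclideanSpace.real_norm_sq_eq, mul_sum]
        rw [sum_comm]
        simp
    _ = ∑ c, ∑ j, ∑ a, p j a * X j a c ^ 2 :=
        sum_congr rfl fun c _ => sum_prod_mul_sum_sq hp (fun j a => X j a c) (hcoord c)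
    _ = ∑ j, ∑ a, p j a * ‖X j a‖ ^ 2 := by
        simp_rw [EuclideanSpace.real_norm_sq_eq, mul_sum]
        rw [sum_comm]
        exact sum_congr rfl fun j _ => sum_comm

end ProductWeight

namespace simplex

variable {K : ℕ} {p q : EuclideanSpace ℝ (Fin K)}

theorem apply_le_one (hp : p ∈ simplex K) (a : Fin K) : p a ≤ 1 :=
  hp.2 ▸ single_le_sum (fun b _ => hp.1 b) (mem_univ a)

theorem single_mem (b : Fin K) : EuclideanSpace.single b (1 : ℝ) ∈ simplex K := by
  refine ⟨fun a => ?_, ?_⟩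
  · rw [PiLp.single_apply]
    positivity
  · simp

theorem norm_sub_sq_le_two (hp : p ∈ simplex K) (hq : q ∈ simplex K) : ‖p - q‖ ^ 2 ≤ 2 := by
  rw [EuclideanSpace.real_norm_sq_eq]
  calc ∑ a, (p - q) a ^ 2 ≤ ∑ a, (p a + q a) := by
        refine sum_le_sum fun a _ => ?_
        have := hp.1 a; have := hq.1 a; have := apply_le_one hp a; have := apply_le_one hq a
        simp only [PiLp.sub_apply]
        nlinarith
    _ = 2 := by rw [sum_add_distrib, hp.2, hq.2]; norm_num

theorem norm_sub_le_sqrt_two (hp : p ∈ simplex K) (hq : q ∈ simplex K) : ‖p - q‖ ≤ √2 :=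
  Real.le_sqrt_of_sq_le (norm_sub_sq_le_two hp hq)

theorem bddAbove_range_sum_mul (g : Fin K → ℝ) :
    BddAbove (Set.range fun p : simplex K => ∑ a, (p : EuclideanSpace ℝ (Fin K)) a * g a) := by
  refine ⟨∑ a, |g a|, ?_⟩
  rintro _ ⟨⟨p, hp⟩, rfl⟩
  refine sum_le_sum fun a _ => ?_
  calc p a * g a ≤ p a * |g a| := mul_le_mul_of_nonneg_left (le_abs_self _) (hp.1 a)
    _ ≤ |g a| := mul_le_of_le_one_left (abs_nonneg _) (apply_le_one hp a)

end simplex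

def profileMean {K N : ℕ} (π : Fin N → EuclideanSpace ℝ (Fin K)) : EuclideanSpace ℝ (Fin K) :=
  (N : ℝ)⁻¹ • ∑ j, π j

section NPlayer

variable {K N : ℕ}

theorem empDist_mem_simplex (hN : 0 < N) (v : Fin N → Fin K) : empDist K N v ∈ simplex K := by
  refine ⟨fun a => ?_, ?_⟩
  · simp only [empDist, PiLp.smul_apply, WithLp.ofLp_sum, Finset.sum_apply, PiLp.single_apply]
    positivity
  · simp only [empDist, PiLp.smul_apply, WithLp.ofLp_sum, PiLp.ofLp_single, Finset.sum_apply,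
      smul_eq_mul, ← mul_sum]
    rw [sum_comm]
    simp [Pi.single_apply, hN.ne']

theorem empDist_sub_profileMean (v : Fin N → Fin K) (π : Fin N → EuclideanSpace ℝ (Fin K)) :
    empDist K N v - profileMean π
      = (N : ℝ)⁻¹ • ∑ j, (EuclideanSpace.single (v j) (1 : ℝ) - π j) := by
  rw [empDist, profileMean, ← smul_sub, sum_sub_distrib]

theorem sum_smul_single_sub_eq_zero {p : EuclideanSpace ℝ (Fin K)} (hp : p ∈ simplex K) :
    ∑ b, p b • (EuclideanSpace.single b (1 : ℝ) - p) = 0 := by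
  ext c
  simp [Pi.single_apply, mul_sub, sum_sub_distrib, ← sum_mul, hp.2]

theorem sum_prod_mul_norm_empDist_sub_sq_le (hN : 0 < N) {π : Fin N → EuclideanSpace ℝ (Fin K)}
    (hπ : ∀ j, π j ∈ simplex K) :
    ∑ v : Fin N → Fin K, (∏ j, π j (v j)) * ‖empDist K N v - profileMean π‖ ^ 2 ≤ 2 / N := by
  have hvar := ProductWeight.sum_prod_mul_norm_sum_sq (p := fun j a => π j a) (fun j => (hπ j).2)
    (fun j b => EuclideanSpace.single b (1 : ℝ) - π j) (fun j => sum_smul_single_sub_eq_zero (hπ j))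
  have hdiag : ∑ j, ∑ b, π j b * ‖EuclideanSpace.single b (1 : ℝ) - π j‖ ^ 2 ≤ 2 * N := by
    calc ∑ j, ∑ b, π j b * ‖EuclideanSpace.single b (1 : ℝ) - π j‖ ^ 2
        ≤ ∑ j : Fin N, ∑ b, π j b * 2 := by
          gcongr with j _ b _
          · exact (hπ j).1 b
          · exact simplex.norm_sub_sq_le_two (simplex.single_mem b) (hπ j)
      _ = 2 * N := by simp_rw [← sum_mul, fun j => (hπ j).2]; simp [mul_comm]
  calc ∑ v : Fin N → Fin K, (∏ j, π j (v j)) * ‖empDist K N v - profileMean π‖ ^ 2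
      = (N : ℝ)⁻¹ ^ 2 * ∑ j, ∑ b, π j b * ‖EuclideanSpace.single b (1 : ℝ) - π j‖ ^ 2 := by
        rw [← hvar, mul_sum]
        refine sum_congr rfl fun v _ => ?_
        rw [empDist_sub_profileMean, norm_smul, mul_pow, Real.norm_of_nonneg (by positivity)]
        ring
    _ ≤ (N : ℝ)⁻¹ ^ 2 * (2 * N) := by gcongr
    _ = 2 / N := by field_simp

theorem sum_prod_mul_norm_empDist_sub_le (hN : 0 < N) {π : Fin N → EuclideanSpace ℝ (Fin K)}
    (hπ : ∀ j, π j ∈ simplex K) :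
    ∑ v : Fin N → Fin K, (∏ j, π j (v j)) * ‖empDist K N v - profileMean π‖ ≤ √(2 / N) :=
  (sum_mul_le_sqrt_sum_mul_sq univ (fun v _ => prod_nonneg fun j _ => (hπ j).1 (v j))
    (ProductWeight.sum_prod_eq_one (p := fun j a => π j a) fun j => (hπ j).2)).trans
    (Real.sqrt_le_sqrt (sum_prod_mul_norm_empDist_sub_sq_le hN hπ))

variable {F : EuclideanSpace ℝ (Fin K) → EuclideanSpace ℝ (Fin K)} {L : ℝ}
  {πs : EuclideanSpace ℝ (Fin K)}

theorem abs_Vval_sub_le (hN : 0 < N) (hL : 0 ≤ L)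
    (hFlip : ∀ μ ∈ simplex K, ∀ μ' ∈ simplex K, ‖F μ - F μ'‖ ≤ L * ‖μ - μ'‖)
    (hπs : πs ∈ simplex K) {π : Fin N → EuclideanSpace ℝ (Fin K)} (hπ : ∀ j, π j ∈ simplex K)
    (i : Fin N) :
    |Vval K N F π i - ∑ a, π i a * F πs a| ≤ L * ‖profileMean π - πs‖ + L * √(2 / N) := by
  set w : (Fin N → Fin K) → ℝ := fun v => ∏ j, π j (v j)
  set m := profileMean π
  have hw : ∀ v, 0 ≤ w v := fun v => prod_nonneg fun j _ => (hπ j).1 (v j)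
  have hw1 : ∑ v, w v = 1 := ProductWeight.sum_prod_eq_one (p := fun j a => π j a) fun j => (hπ j).2
  have hpoint (v : Fin N → Fin K) :
      |F (empDist K N v) (v i) - F πs (v i)| ≤ L * ‖empDist K N v - m‖ + L * ‖m - πs‖ :=
    calc |F (empDist K N v) (v i) - F πs (v i)| ≤ ‖F (empDist K N v) - F πs‖ :=
          PiLp.norm_apply_le (F (empDist K N v) - F πs) (v i)
      _ ≤ L * ‖empDist K N v - πs‖ := hFlip _ (empDist_mem_simplex hN v) _ hπs
      _ ≤ L * (‖empDist K N v - m‖ + ‖m - πs‖) := by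
          gcongr; exact norm_sub_le_norm_sub_add_norm_sub _ _ _
      _ = L * ‖empDist K N v - m‖ + L * ‖m - πs‖ := mul_add _ _ _
  calc |Vval K N F π i - ∑ a, π i a * F πs a|
      = |∑ v, w v * (F (empDist K N v) (v i) - F πs (v i))| := by
        rw [Vval, ← ProductWeight.sum_prod_mul_apply (p := fun j a => π j a) (fun j => (hπ j).2),
          ← sum_sub_distrib]
        simp_rw [mul_sub]
        rfl
    _ ≤ ∑ v, w v * (L * ‖empDist K N v - m‖ + L * ‖m - πs‖) := by
        refine (abs_sum_le_sum_abs _ _).trans (sum_le_sum fun v _ => ?_)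
        rw [abs_mul, abs_of_nonneg (hw v)]
        exact mul_le_mul_of_nonneg_left (hpoint v) (hw v)
    _ = L * ‖m - πs‖ * ∑ v, w v + L * ∑ v, w v * ‖empDist K N v - m‖ := by
        rw [mul_sum, mul_sum, ← sum_add_distrib]
        exact sum_congr rfl fun v _ => by ring
    _ ≤ L * ‖m - πs‖ + L * √(2 / N) := by
        rw [hw1, mul_one]
        gcongr
        exact sum_prod_mul_norm_empDist_sub_le hN hπ

theorem profileMean_update_sub (hN : 0 < N) (i : Fin N) (p q : EuclideanSpace ℝ (Fin K)) :
    profileMean (Function.update (fun _ => q) i p) - q = (N : ℝ)⁻¹ • (p - q) := by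
  have hsum : ∑ j, Function.update (fun _ => q) i p j = (p - q) + ∑ _j : Fin N, q := by
    rw [sum_update_of_mem (mem_univ i), sum_eq_add_sum_sdiff_singleton_of_mem (mem_univ i)]
    abel
  rw [profileMean, hsum, sum_const, card_univ, Fintype.card_fin, ← Nat.cast_smul_eq_nsmul ℝ,
    smul_add, inv_smul_smul₀ (by positivity), add_sub_cancel_right]

theorem abs_Vval_update_sub_le (hN : 0 < N) (hL : 0 ≤ L)
    (hFlip : ∀ μ ∈ simplex K, ∀ μ' ∈ simplex K, ‖F μ - F μ'‖ ≤ L * ‖μ - μ'‖)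
    (hπs : πs ∈ simplex K) (i : Fin N) {p : EuclideanSpace ℝ (Fin K)} (hp : p ∈ simplex K) :
    |Vval K N F (Function.update (fun _ => πs) i p) i - ∑ a, p a * F πs a|
      ≤ L * √2 / N + L * √(2 / N) := by
  have hprofile (j : Fin N) : Function.update (fun _ => πs) i p j ∈ simplex K := by
    rcases eq_or_ne j i with rfl | hj
    · simpa using hp
    · simpa [Function.update_of_ne hj] using hπs
  have hmean : ‖profileMean (Function.update (fun _ => πs) i p) - πs‖ ≤ √2 / N := by
    rw [profileMean_update_sub hN, norm_smul, norm_inv, RCLike.norm_natCast, inv_mul_eq_div]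
    gcongr
    exact simplex.norm_sub_le_sqrt_two hp hπs
  have h := abs_Vval_sub_le hN hL hFlip hπs hprofile i
  rw [Function.update_self] at h
  calc _ ≤ _ := h
    _ ≤ L * (√2 / N) + L * √(2 / N) := by gcongr
    _ = L * √2 / N + L * √(2 / N) := by rw [mul_div_assoc]

end NPlayer

theorem two_mul_sqrt_two_error_le (N : ℕ) {L : ℝ} (hL : 0 ≤ L) :
    2 * (L * √2 / N + L * √(2 / N)) ≤ L * (2 * √2 + 4) / N + 4 * L / √N := by
  have hsqrt2 : √2 ≤ 2 := by nlinarith [Real.sq_sqrt (zero_le_two (α := ℝ)), Real.sqrt_nonneg 2]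
  have hroot : L * (√2 / √N) ≤ L * (2 / √N) := by gcongr
  calc 2 * (L * √2 / N + L * √(2 / N)) = 2 * (L * √2 / N) + 2 * (L * (√2 / √N)) := by
        rw [Real.sqrt_div' _ (Nat.cast_nonneg N)]; ring
    _ ≤ 2 * (L * √2 / N) + 4 * (L / N) + 2 * (L * (2 / √N)) := by
        linarith [show 0 ≤ L / N by positivity]
    _ = L * (2 * √2 + 4) / N + 4 * L / √N := by ring

theorem stmt4_general (K N : ℕ) (hN : 0 < N) (L δ : ℝ) (hL : 0 ≤ L)
    (F : EuclideanSpace ℝ (Fin K) → EuclideanSpace ℝ (Fin K))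
    (hFlip : ∀ μ ∈ simplex K, ∀ μ' ∈ simplex K, ‖F μ - F μ'‖ ≤ L * ‖μ - μ'‖)
    (πs : EuclideanSpace ℝ (Fin K)) (hπs : πs ∈ simplex K)
    (hMFNE : (⨆ p : simplex K, ∑ a : Fin K, (p : EuclideanSpace ℝ (Fin K)) a * F πs a) - δ
        ≤ ∑ a : Fin K, πs a * F πs a) :
    ∀ i : Fin N, expl K N F (fun _ => πs) i
        ≤ δ + L * (2 * Real.sqrt 2 + 4) / N + 4 * L / Real.sqrt N := by
  intro i
  have : Nonempty (simplex K) := ⟨⟨πs, hπs⟩⟩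
  have hbest (q : simplex K) : ∑ a, (q : EuclideanSpace ℝ (Fin K)) a * F πs a
      ≤ ∑ a, πs a * F πs a + δ := by
    linarith [le_ciSup (simplex.bddAbove_range_sum_mul (F πs)) q]
  have hdev (q : simplex K) := abs_le.1 (abs_Vval_update_sub_le hN hL hFlip hπs i q.2)
  have hstay := abs_le.1 (abs_Vval_update_sub_le hN hL hFlip hπs i hπs)
  rw [Function.update_eq_self] at hstay
  have hconst := two_mul_sqrt_two_error_le N hL
  rw [expl, sub_le_iff_le_add]
  refine ciSup_le fun q => ?_
  linarith [hdev q, hbest q]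

/-- Theorem 1 of the paper, with explicit constants.
If `F : Δ_A → [0,1]^K` is `L`-Lipschitz, `δ ≥ 0`, and `π*` is a `δ`-MF-NE of `F`, then the
symmetric profile `(π*,…,π*)` is a `(δ + L(2√2+4)/N + 4L/√N)`-Nash equilibrium of the
`N`-player game: every player's exploitability is at most this quantity. -/
theorem stmt4 (K N : ℕ) (hK : 0 < K) (hN : 0 < N) (L δ : ℝ) (hL : 0 ≤ L) (hδ : 0 ≤ δ)
    (F : EuclideanSpace ℝ (Fin K) → EuclideanSpace ℝ (Fin K))
    (hFmap : ∀ μ ∈ simplex K, ∀ a : Fin K, F μ a ∈ Set.Icc (0 : ℝ) 1)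
    (hFlip : ∀ μ ∈ simplex K, ∀ μ' ∈ simplex K, ‖F μ - F μ'‖ ≤ L * ‖μ - μ'‖)
    (πs : EuclideanSpace ℝ (Fin K)) (hπs : πs ∈ simplex K)
    (hMFNE : (⨆ p : simplex K, ∑ a : Fin K, (p : EuclideanSpace ℝ (Fin K)) a * F πs a) - δ
        ≤ ∑ a : Fin K, πs a * F πs a) :
    ∀ i : Fin N, expl K N F (fun _ => πs) i
        ≤ δ + L * (2 * Real.sqrt 2 + 4) / N + 4 * L / Real.sqrt N :=
  stmt4_general K N hN L δ hL F hFlip πs hπs hMFNE
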